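/- Let ℓ ≥ 4 be even and let α ≥ 1 and t ≥ 1 be integers with α ≥ 2t + 2ℓ − 2. In the integers ℤ, let I₁ = {2γ+1 : 0 ≤ γ ≤ α}, I₂ = {2α+5+2θ : 0 ≤ θ ≤ t}, I₃ = {2α+4t+9}, S⁺ = I₁ ∪ I₂ ∪ I₃, and M = ℓ(2α+4t+9). Then the ℓ-fold sumset ℓS⁺ equals [ℓ, M]_e \ ([M−2t−2, M−2]_e ∪ {M−4t−6}). -/

import Mathlib

/-!
Put `N = 2α + 4t + 9`. The elements of `S⁺` are exactly the numbers `N - 2d` with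
`d ∈ D = halfDeficits t α = {0} ∪ [t + 2, 2t + 2] ∪ [2t + 4, α + 2t + 4]`, so `ℓS⁺ = ℓN - 2 · ℓD`, and it remains to
compute `ℓD`. Every nonzero element of `D` is at least `t + 2` and `2t + 3 ∉ D`, so a sum of elements
of `D` is never in `[1, t + 1]` and never equals `2t + 3`. Conversely, since `α ≥ 2t + 3`, the sums
of `k` elements of `[2t + 4, α + 2t + 4]` form the interval `[k(2t + 4), k(α + 2t + 4)]`, and these
intervals overlap for consecutive `k`; padding with zeros, `ℓD` contains all of `[2t + 4, ℓ(α + 2t + 4)]`.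
-/

def sumset {Γ : Type*} [AddCommMonoid Γ] (m : ℕ) (S : Set Γ) : Set Γ :=
  {x | ∃ f : Fin m → Γ, (∀ i, f i ∈ S) ∧ ∑ i, f i = x}

open Pointwise

theorem sumset_eq_nsmul {Γ : Type*} [AddCommMonoid Γ] (m : ℕ) (S : Set Γ) :
    sumset m S = m • S :=
  Set.ext fun _ => Set.mem_nsmul_iff_sum.symm

theorem Set.nsmul_image_add_addMonoidHom {Γ Γ' : Type*} [AddCommMonoid Γ] [AddCommMonoid Γ']
    (g : Γ →+ Γ') (c : Γ') (S : Set Γ) (n : ℕ) :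
    n • ((fun x => c + g x) '' S) = (fun y => n • c + g y) '' (n • S) := by
  have h : (fun x => c + g x) '' S = {c} + g '' S := by
    rw [Set.singleton_add, Set.image_image]
  rw [h, nsmul_add, Set.nsmul_singleton, ← Set.image_nsmul, Set.singleton_add, Set.image_image]

theorem Int.insert_zero_Icc_subset_nsmul {b M : ℤ} (hb : 0 < b) (hbM : 2 * b ≤ M + 1) (k : ℕ) :
    insert 0 (Set.Icc b (k * M)) ⊆ k • insert 0 (Set.Icc b M) := by
  induction k with
  | zero =>
    intro e he
    have : e = 0 := by simp at he; omega
    simp [this]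
  | succ k ih =>
    rintro e (rfl | ⟨hbe, heM⟩)
    · exact Set.zero_mem_nsmul (Set.mem_insert _ _)
    rw [succ_nsmul]
    by_cases heM' : e ≤ M
    · exact Set.mem_add.2 ⟨0, Set.zero_mem_nsmul (Set.mem_insert _ _), e, Or.inr ⟨hbe, heM'⟩,
        zero_add e⟩
    obtain _ | j := k
    · simp at heM; omega
    have hjM : 0 ≤ (j : ℤ) * M := mul_nonneg j.cast_nonneg (by omega)
    have hj1 : ((j + 1 : ℕ) : ℤ) * M = j * M + M := by push_cast; ring
    have hj2 : ((j + 1 + 1 : ℕ) : ℤ) * M = j * M + M + M := by push_cast; ring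
    -- `e = (e - d) + d` with the last summand `d = e - max b (e - M)` taken as large as possible
    refine Set.mem_add.2 ⟨max b (e - M), ih (Or.inr ⟨?_, ?_⟩), e - max b (e - M),
      Or.inr ⟨?_, ?_⟩, add_sub_cancel _ _⟩ <;> omega

def halfDeficits (t α : ℤ) : Set ℤ :=
  insert 0 (Set.Icc (t + 2) (2 * t + 2) ∪ Set.Icc (2 * t + 4) (α + 2 * t + 4))

theorem union_eq_image_halfDeficits (α t : ℤ) :
    {x : ℤ | ∃ g : ℤ, 0 ≤ g ∧ g ≤ α ∧ x = 2 * g + 1} ∪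
        {x : ℤ | ∃ θ : ℤ, 0 ≤ θ ∧ θ ≤ t ∧ x = 2 * α + 5 + 2 * θ} ∪ {2 * α + 4 * t + 9} =
      (fun d => (2 * α + 4 * t + 9) + AddMonoidHom.mulLeft (-2) d) '' halfDeficits t α := by
  ext x
  simp only [halfDeficits, AddMonoidHom.coe_mulLeft, Set.mem_union, Set.mem_ofPred_eq,
    Set.mem_singleton_iff, Set.mem_image, Set.mem_insert_iff, Set.mem_Icc]
  constructor
  · rintro ((⟨g, hg0, hgα, rfl⟩ | ⟨θ, hθ0, hθt, rfl⟩) | rfl)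
    · exact ⟨α + 2 * t + 4 - g, by omega, by ring⟩
    · exact ⟨2 * t + 2 - θ, by omega, by ring⟩
    · exact ⟨0, by omega, by ring⟩
  · rintro ⟨d, rfl | ⟨hd1, hd2⟩ | ⟨hd1, hd2⟩, rfl⟩
    · exact Or.inr (by ring)
    · exact Or.inl (Or.inr ⟨2 * t + 2 - d, by omega, by omega, by ring⟩)
    · exact Or.inl (Or.inl ⟨α + 2 * t + 4 - d, by omega, by omega, by ring⟩)

theorem nsmul_halfDeficits_subset {t α : ℤ} (ht : 0 ≤ t) (hα : 0 ≤ α) (k : ℕ) :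
    k • halfDeficits t α ⊆
      Set.Icc 0 (k * (α + 2 * t + 4)) \ (Set.Icc 1 (t + 1) ∪ {2 * t + 3}) := by
  induction k with
  | zero => simp; omega
  | succ k ih =>
    rw [succ_nsmul]
    rintro _ ⟨e, he, d, hd, rfl⟩
    have hk : ((k + 1 : ℕ) : ℤ) * (α + 2 * t + 4) = k * (α + 2 * t + 4) + (α + 2 * t + 4) := by
      push_cast; ring
    have he' := ih he
    simp only [halfDeficits, Set.mem_insert_iff, Set.mem_union, Set.mem_Icc, Set.mem_sdiff,
      Set.mem_singleton_iff] at he' hd ⊢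
    omega

theorem subset_nsmul_halfDeficits {t α : ℤ} (ht : 0 ≤ t) (hα : 2 * t + 3 ≤ α) (k : ℕ) :
    Set.Icc 0 (k * (α + 2 * t + 4)) \ (Set.Icc 1 (t + 1) ∪ {2 * t + 3}) ⊆
      k • halfDeficits t α := by
  rintro e ⟨⟨he0, hek⟩, hne⟩
  simp only [Set.mem_union, Set.mem_Icc, Set.mem_singleton_iff] at hne
  by_cases hsmall : e ≤ 2 * t + 2
  · have hD : e ∈ halfDeficits t α := by
      simp only [halfDeficits, Set.mem_insert_iff, Set.mem_union, Set.mem_Icc]; omega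
    rcases eq_or_ne k 0 with rfl | hk
    · simp at hek; simp; omega
    · exact Set.subset_nsmul (Set.mem_insert _ _) hk hD
  · have hsub : insert 0 (Set.Icc (2 * t + 4) (α + 2 * t + 4)) ⊆ halfDeficits t α :=
      Set.insert_subset_insert Set.subset_union_right
    exact Set.nsmul_subset_nsmul_left hsub
      (Int.insert_zero_Icc_subset_nsmul (by omega) (by omega) k (Or.inr ⟨by omega, hek⟩))

theorem nsmul_halfDeficits {t α : ℤ} (ht : 0 ≤ t) (hα : 2 * t + 3 ≤ α) (k : ℕ) :
    k • halfDeficits t α =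
      Set.Icc 0 (k * (α + 2 * t + 4)) \ (Set.Icc 1 (t + 1) ∪ {2 * t + 3}) :=
  (nsmul_halfDeficits_subset ht (by omega) k).antisymm (subset_nsmul_halfDeficits ht hα k)

theorem stmt5_general (ℓ : ℕ) (α t : ℤ) (hℓe : Even ℓ) (hℓ : 4 ≤ ℓ) (ht : 1 ≤ t)
    (hαt : 2 * t + 2 * (ℓ : ℤ) - 2 ≤ α) :
    sumset ℓ
      ({x : ℤ | ∃ g : ℤ, 0 ≤ g ∧ g ≤ α ∧ x = 2 * g + 1} ∪
        {x : ℤ | ∃ θ : ℤ, 0 ≤ θ ∧ θ ≤ t ∧ x = 2 * α + 5 + 2 * θ} ∪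
        {2 * α + 4 * t + 9}) =
      {x : ℤ | Even x ∧ (ℓ : ℤ) ≤ x ∧ x ≤ (ℓ : ℤ) * (2 * α + 4 * t + 9)} \
        ({x : ℤ | Even x ∧ (ℓ : ℤ) * (2 * α + 4 * t + 9) - 2 * t - 2 ≤ x ∧
            x ≤ (ℓ : ℤ) * (2 * α + 4 * t + 9) - 2} ∪
          {(ℓ : ℤ) * (2 * α + 4 * t + 9) - 4 * t - 6}) := by
  rw [union_eq_image_halfDeficits, sumset_eq_nsmul, Set.nsmul_image_add_addMonoidHom,
    nsmul_halfDeficits (by omega) (by omega)]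
  obtain ⟨r, hr⟩ := hℓe
  have hℓr : (ℓ : ℤ) = r + r := by exact_mod_cast hr
  have hN : (ℓ : ℤ) * (2 * α + 4 * t + 9) = 2 * (ℓ * (α + 2 * t + 4)) + ℓ := by ring
  ext x
  simp only [AddMonoidHom.coe_mulLeft, Set.mem_image, Set.mem_sdiff, Set.mem_Icc, Set.mem_union,
    Set.mem_singleton_iff, Set.mem_ofPred_eq, nsmul_eq_mul, Int.even_iff]
  constructor
  · rintro ⟨e, he, rfl⟩
    omega
  · rintro ⟨⟨hx, hx1, hx2⟩, hx3⟩
    exact ⟨(ℓ * (2 * α + 4 * t + 9) - x) / 2, by omega, by omega⟩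

theorem stmt5 (ℓ : ℕ) (α t : ℤ) (hℓe : Even ℓ) (hℓ : 4 ≤ ℓ) (hα : 1 ≤ α) (ht : 1 ≤ t)
    (hαt : 2 * t + 2 * (ℓ : ℤ) - 2 ≤ α) :
    sumset ℓ
      ({x : ℤ | ∃ g : ℤ, 0 ≤ g ∧ g ≤ α ∧ x = 2 * g + 1} ∪
        {x : ℤ | ∃ θ : ℤ, 0 ≤ θ ∧ θ ≤ t ∧ x = 2 * α + 5 + 2 * θ} ∪
        {2 * α + 4 * t + 9}) =
      {x : ℤ | Even x ∧ (ℓ : ℤ) ≤ x ∧ x ≤ (ℓ : ℤ) * (2 * α + 4 * t + 9)} \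
        ({x : ℤ | Even x ∧ (ℓ : ℤ) * (2 * α + 4 * t + 9) - 2 * t - 2 ≤ x ∧
            x ≤ (ℓ : ℤ) * (2 * α + 4 * t + 9) - 2} ∪
          {(ℓ : ℤ) * (2 * α + 4 * t + 9) - 4 * t - 6}) :=
  stmt5_general ℓ α t hℓe hℓ ht hαt
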